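/- For any expression 𝐰 and v ≤ m_*(𝐰), the right-most subexpression of v in 𝐰 is distinguished, i.e., writing v_{(k)} = s'_{i_1}⋯s'_{i_k} for its partial products, one has v_{(k)} ≤ v_{(k-1)} s_{i_k} for all k. -/

import Mathlib

variable {B : Type*} {W : Type*} [Group W] {M : CoxeterMatrix B}

/-- The Demazure product `m_*(𝐰)` of an expression `𝐰 = (i_1, …, i_n)`. -/
noncomputable def demazureProd (cs : CoxeterSystem M W) (ω : List B) : W :=
  ω.foldr (fun i w =>
    if cs.length (cs.simple i * w) < cs.length w then w else cs.simple i * w) 1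

/-- The Bruhat order on `W`: `u ≤ w` iff some reduced expression for `w` contains a
subword whose product is `u`. -/
def bruhatLE (cs : CoxeterSystem M W) (u w : W) : Prop :=
  ∃ ω : List B, cs.IsReduced ω ∧ cs.wordProd ω = w ∧
    ∃ ω' : List B, ω'.Sublist ω ∧ cs.wordProd ω' = u

/-- Auxiliary recursion for the right-most subexpression: the input list is the *reversed*
expression, processed from the head (i.e. from the right end of the original expression).
A letter is selected (`some i`) when it decreases the length of `v` multiplied on the right. -/
noncomputable def rightMostAux (cs : CoxeterSystem M W) : List B → W → List (Option B)
  | [], _ => []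
  | i :: rest, v =>
    if cs.length (v * cs.simple i) < cs.length v then
      some i :: rightMostAux cs rest (v * cs.simple i)
    else
      none :: rightMostAux cs rest v

/-- The right-most subexpression for `v` in `𝐰`, as a list of optional letters aligned with
`𝐰` (with `none` standing for the identity entry `e`). -/
noncomputable def rightMostSub (cs : CoxeterSystem M W) (ω : List B) (v : W) :
    List (Option B) :=
  (rightMostAux cs ω.reverse v).reverse

open CoxeterSystem List

attribute [local instance] Classical.propDecidable

namespace RMAux

theorem invo_cancel_left {W : Type*} [Group W] {a : W} (ha : a * a = 1) (w : W) :
    a * (a * w) = w := by rw [← mul_assoc, ha, one_mul]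

variable (cs : CoxeterSystem M W)

local prefix:100 "ℓ" => cs.length
local prefix:100 "π" => cs.wordProd
local prefix:100 "σ" => cs.simple

/-- The basic permutation of `W × ZMod 2` attached to a generator. -/
noncomputable def permF (i : B) : Equiv.Perm (W × ZMod 2) where
  toFun p := (σ i * p.1 * σ i, p.2 + if p.1 = σ i then 1 else 0)
  invFun p := (σ i * p.1 * σ i, p.2 + if p.1 = σ i then 1 else 0)
  left_inv := by
    rintro ⟨t, ε⟩
    have ha := cs.simple_mul_simple_self i
    have h1 : σ i * (σ i * t * σ i) * σ i = t := by
      simp only [← mul_assoc, ha, one_mul]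
      rw [mul_assoc, ha, mul_one]
    have h2 : (σ i * t * σ i = σ i) ↔ (t = σ i) := by
      constructor
      · intro h
        have := congrArg (fun x => σ i * x * σ i) h
        simpa only [h1, ha, one_mul] using this
      · rintro rfl
        rw [ha, one_mul]
    simp only [Prod.mk.injEq, h1]
    refine ⟨trivial, ?_⟩
    rw [if_congr h2 rfl rfl, add_assoc]
    split <;> simp [(by decide : (1 : ZMod 2) + 1 = 0)]
  right_inv := by
    rintro ⟨t, ε⟩
    have ha := cs.simple_mul_simple_self i
    have h1 : σ i * (σ i * t * σ i) * σ i = t := by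
      simp only [← mul_assoc, ha, one_mul]
      rw [mul_assoc, ha, mul_one]
    have h2 : (σ i * t * σ i = σ i) ↔ (t = σ i) := by
      constructor
      · intro h
        have := congrArg (fun x => σ i * x * σ i) h
        simpa only [h1, ha, one_mul] using this
      · rintro rfl
        rw [ha, one_mul]
    simp only [Prod.mk.injEq, h1]
    refine ⟨trivial, ?_⟩
    rw [if_congr h2 rfl rfl, add_assoc]
    split <;> simp [(by decide : (1 : ZMod 2) + 1 = 0)]

theorem permF_apply (i : B) (p : W × ZMod 2) :
    permF cs i p = (σ i * p.1 * σ i, p.2 + if p.1 = σ i then 1 else 0) := rfl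

theorem permF_pow_apply (i j : B) (k : ℕ) (p : W × ZMod 2) :
    ((permF cs i * permF cs j) ^ k) p =
      ((σ i * σ j) ^ k * p.1 * (σ j * σ i) ^ k,
        p.2 + ∑ l ∈ Finset.range (2 * k),
          (if p.1 = (σ j * σ i) ^ l * σ j then (1 : ZMod 2) else 0)) := by
  have ha := cs.simple_mul_simple_self i
  have hb := cs.simple_mul_simple_self j
  induction k generalizing p with
  | zero => simp
  | succ k ih =>
    have hexp : ∀ l : ℕ, (σ j * σ i) ^ (l + 2) = (σ j * σ i) * (σ j * σ i) ^ l * (σ j * σ i) := by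
      intro l
      rw [pow_succ, pow_succ']
    have hcond : ∀ l : ℕ,
        (σ i * σ j * p.1 * (σ j * σ i) = (σ j * σ i) ^ l * σ j)
          ↔ (p.1 = (σ j * σ i) ^ (l + 2) * σ j) := by
      intro l
      constructor
      · intro h
        have := congrArg (fun y => σ j * (σ i * y) * (σ i * σ j)) h
        simp only [mul_assoc, invo_cancel_left ha, invo_cancel_left hb, ha, hb,
          mul_one, one_mul] at this
        rw [this, hexp]
        simp only [mul_assoc]
      · rintro h
        rw [h, hexp]
        simp only [mul_assoc, invo_cancel_left ha, invo_cancel_left hb, ha, hb,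
          mul_one, one_mul]
    have step : (permF cs i * permF cs j) p =
        ((σ i * σ j) * p.1 * (σ j * σ i),
          p.2 + ((if p.1 = (σ j * σ i) ^ 0 * σ j then (1 : ZMod 2) else 0)
            + if p.1 = (σ j * σ i) ^ 1 * σ j then (1 : ZMod 2) else 0)) := by
      simp only [Equiv.Perm.mul_apply, permF_apply]
      simp only [Prod.mk.injEq]
      constructor
      · simp only [mul_assoc]
      · have c1 : (p.1 = σ j) ↔ (p.1 = (σ j * σ i) ^ 0 * σ j) := by rw [pow_zero, one_mul]
        have c2 : (σ j * p.1 * σ j = σ i) ↔ (p.1 = (σ j * σ i) ^ 1 * σ j) := by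
          rw [pow_one]
          constructor
          · intro h
            have := congrArg (fun y => σ j * y * σ j) h
            simp only [mul_assoc, invo_cancel_left hb, invo_cancel_left ha, ha, hb,
              mul_one, one_mul] at this
            rw [this]
            simp only [mul_assoc]
          · intro h
            rw [h]
            simp only [mul_assoc, invo_cancel_left hb, invo_cancel_left ha, ha, hb,
              mul_one, one_mul]
        rw [if_congr c1 rfl rfl, if_congr c2 rfl rfl, add_assoc]
    rw [pow_succ, Equiv.Perm.mul_apply, step, ih]
    simp only [Prod.mk.injEq]
    constructor
    · rw [pow_succ (σ i * σ j) k, pow_succ' (σ j * σ i) k]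
      simp only [mul_assoc]
    · simp only [hcond]
      have h2k : 2 * (k + 1) = (2 * k + 1) + 1 := by ring
      rw [h2k, Finset.sum_range_succ', Finset.sum_range_succ']
      ring

theorem permF_liftable : M.IsLiftable (permF cs) := by
  intro i j
  rcases Nat.eq_zero_or_pos (M i j) with h0 | hpos
  · rw [h0, pow_zero]
  · ext p
    · rw [permF_pow_apply, cs.simple_mul_simple_pow i j, cs.simple_mul_simple_pow' i j,
        one_mul, mul_one]
      rfl
    · rw [permF_pow_apply]
      show _ + _ = p.2
      have hq : ∀ l : ℕ, (σ j * σ i) ^ (M i j + l) * σ j = (σ j * σ i) ^ l * σ j := by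
        intro l
        rw [pow_add, cs.simple_mul_simple_pow' i j, one_mul]
      have : (2 : ℕ) * M i j = M i j + M i j := two_mul _
      rw [this, Finset.sum_range_add]
      simp only [hq]
      rw [CharTwo.add_self_eq_zero, add_zero]


noncomputable def phi : W →* Equiv.Perm (W × ZMod 2) := cs.lift ⟨permF cs, permF_liftable cs⟩

theorem phi_simple (i : B) : phi cs (σ i) = permF cs i :=
  cs.lift_apply_simple (permF_liftable cs) i

theorem rightInvSeq_cons' (i : B) (ω : List B) :
    cs.rightInvSeq (i :: ω) = (π ω)⁻¹ * σ i * π ω :: cs.rightInvSeq ω := rfl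

theorem phi_wordProd (ω : List B) (t : W) (ε : ZMod 2) :
    phi cs (π ω) (t, ε) = (π ω * t * (π ω)⁻¹, ε + ((cs.rightInvSeq ω).count t : ZMod 2)) := by
  induction ω generalizing ε with
  | nil => simp [cs.wordProd_nil]
  | cons i ω ih =>
    rw [cs.wordProd_cons, map_mul, Equiv.Perm.mul_apply, ih, phi_simple, permF_apply]
    rw [rightInvSeq_cons']
    simp only [List.count_cons]
    have hcond : (π ω * t * (π ω)⁻¹ = σ i) ↔ ((π ω)⁻¹ * σ i * π ω = t) := by
      constructor
      · rintro h; rw [← h]; group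
      · rintro rfl; group
    simp only [Prod.mk.injEq]
    constructor
    · rw [mul_inv_rev, cs.inv_simple]
      simp only [mul_assoc]
    · rw [if_congr hcond rfl rfl]
      push_cast
      simp only [beq_iff_eq]
      by_cases h : (π ω)⁻¹ * σ i * π ω = t
      · simp only [if_pos h]; ring
      · simp only [if_neg h]; ring

/-- Parity invariant. -/
noncomputable def mu (w t : W) : ZMod 2 := (phi cs w (t, 0)).2

theorem count_ris_eq_mu (ω : List B) (t : W) :
    ((cs.rightInvSeq ω).count t : ZMod 2) = mu cs (π ω) t := by
  rw [mu, phi_wordProd, zero_add]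

theorem rightInvSeq_append (A C : List B) :
    cs.rightInvSeq (A ++ C)
      = (cs.rightInvSeq A).map (fun x => (π C)⁻¹ * x * π C) ++ cs.rightInvSeq C := by
  induction A with
  | nil => simp
  | cons i A ih =>
    rw [cons_append, rightInvSeq_cons', rightInvSeq_cons', ih, map_cons, cons_append]
    congr 1
    rw [cs.wordProd_append, mul_inv_rev]
    simp only [mul_assoc]

theorem lis_eq_map_conj (ω : List B) :
    cs.leftInvSeq ω = (cs.rightInvSeq ω).map (fun x => π ω * x * (π ω)⁻¹) := by
  apply List.ext_getElem
  · simp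
  · intro j h1 h2
    rw [length_leftInvSeq] at h1
    have hlt : j < ω.length := h1
    have hrj : j < (cs.rightInvSeq ω).length := by rw [length_rightInvSeq]; exact hlt
    have hlj : j < (cs.leftInvSeq ω).length := by rw [length_leftInvSeq]; exact hlt
    rw [getElem_map]
    rw [← getD_eq_getElem (cs.leftInvSeq ω) 1 hlj, ← getD_eq_getElem (cs.rightInvSeq ω) 1 hrj]
    rw [cs.getD_rightInvSeq, cs.getD_leftInvSeq]
    have hsplit : π ω = π (ω.take j) * (Option.map cs.simple (ω[j]?)).getD 1
        * π (ω.drop (j + 1)) := by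
      conv_lhs => rw [← List.take_append_drop (j+1) ω]
      rw [cs.wordProd_append, List.take_succ]
      rw [cs.wordProd_append]
      congr 2
      rw [getElem?_eq_getElem hlt]
      simp [cs.wordProd_singleton]
    set a := π (ω.take j)
    set b := (Option.map cs.simple (ω[j]?)).getD 1
    set c := π (ω.drop (j + 1))
    have hb : b * b = 1 := by
      have : b = σ (ω[j]) := by
        simp only [b, getElem?_eq_getElem hlt, Option.map_some,
          Option.getD_some]
      rw [this]; exact cs.simple_mul_simple_self _
    have hbinv : b⁻¹ = b := inv_eq_of_mul_eq_one_right hb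
    rw [hsplit, mul_inv_rev, mul_inv_rev, hbinv]
    simp only [mul_assoc, mul_inv_cancel_left, invo_cancel_left hb]

theorem mu_one (t : W) : mu cs 1 t = 0 := by
  have := phi_wordProd cs [] t 0
  simp only [cs.wordProd_nil] at this
  rw [mu, this]
  simp

theorem mu_eq_zero_aux (n : ℕ) : ∀ w t : W, ℓ w ≤ n → cs.IsReflection t →
    ℓ w < ℓ (w * t) → mu cs w t = 0 := by
  induction n with
  | zero =>
    intro w t hn ht hlt
    have hw : w = 1 := cs.length_eq_zero_iff.mp (Nat.le_zero.mp hn)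
    rw [hw]; exact mu_one cs t
  | succ n IH =>
    intro w t hn ht hlt
    by_cases hw : w = 1
    · rw [hw]; exact mu_one cs t
    · obtain ⟨j, hj⟩ := cs.exists_rightDescent_of_ne_one hw
      have hj' : ℓ (w * σ j) < ℓ w := hj
      have hcancel := cs.simple_mul_simple_cancel_right (w := w) j
      have hlen' : ℓ (w * σ j) + 1 = ℓ w := by
        rcases cs.length_mul_simple w j with h | h
        · omega
        · exact h
      obtain ⟨ρ', _, hπ⟩ := cs.exists_reduced_word' (w * σ j)
      have hword : w = π (ρ'.concat j) := by
        rw [cs.wordProd_concat, ← hπ, hcancel]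
      have hmu : mu cs w t = ((cs.rightInvSeq (ρ'.concat j)).count t : ZMod 2) := by
        rw [count_ris_eq_mu, ← hword]
      have htne : t ≠ σ j := by
        intro h
        rw [h] at hlt
        omega
      have hc2 : List.count t [σ j] = 0 := by
        simp [List.count_cons, htne, Ne.symm htne]
      have hteq : t = (MulAut.conj (σ j)) (σ j * t * σ j) := by
        simp only [MulAut.conj_apply, cs.inv_simple]
        simp only [← mul_assoc, cs.simple_mul_simple_self, one_mul]
        rw [mul_assoc, cs.simple_mul_simple_self, mul_one]
      have hcount : (cs.rightInvSeq (ρ'.concat j)).count t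
          = List.count (σ j * t * σ j) (cs.rightInvSeq ρ') + List.count t [σ j] := by
        rw [cs.rightInvSeq_concat, List.concat_eq_append, List.count_append]
        congr 1
        · conv_lhs => rw [hteq]
          exact List.count_map_of_injective _ _ (MulEquiv.injective _) _
      have hres : ((cs.rightInvSeq ρ').count (σ j * t * σ j) : ZMod 2)
          = mu cs (w * σ j) (σ j * t * σ j) := by
        rw [count_ris_eq_mu, ← hπ]
      have hrefl : cs.IsReflection (σ j * t * σ j) := by
        have := ht.conj (σ j)
        rwa [cs.inv_simple] at this
      have hascent : ℓ (w * σ j) < ℓ (w * σ j * (σ j * t * σ j)) := by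
        have he : w * σ j * (σ j * t * σ j) = w * t * σ j := by
          simp only [mul_assoc, invo_cancel_left (cs.simple_mul_simple_self j)]
        rw [he]
        rcases cs.length_mul_simple (w * t) j with h | h <;> omega
      have := IH (w * σ j) (σ j * t * σ j) (by omega) hrefl hascent
      rw [hmu, hcount, hc2, add_zero, hres, this]

theorem mu_eq_zero {w t : W} (ht : cs.IsReflection t) (hlt : ℓ w < ℓ (w * t)) :
    mu cs w t = 0 :=
  mu_eq_zero_aux cs (ℓ w) w t le_rfl ht hlt

theorem mu_self {t : W} (ht : cs.IsReflection t) : mu cs t t = 1 := by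
  obtain ⟨r, i, rfl⟩ := ht
  obtain ⟨ρ, _, hπ⟩ := cs.exists_reduced_word' r
  set t := r * σ i * r⁻¹ with hts
  have hword : t = π (ρ ++ ([i] ++ ρ.reverse)) := by
    rw [cs.wordProd_append, cs.wordProd_append, cs.wordProd_reverse, ← hπ,
      cs.wordProd_singleton, hts, mul_assoc]
  have hmu : mu cs t t = ((cs.rightInvSeq (ρ ++ ([i] ++ ρ.reverse))).count t : ZMod 2) := by
    rw [count_ris_eq_mu, ← hword]
  rw [hmu, rightInvSeq_append, rightInvSeq_append, List.count_append, List.count_append]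
  have hπC : π ([i] ++ ρ.reverse) = σ i * r⁻¹ := by
    rw [cs.wordProd_append, cs.wordProd_reverse, ← hπ, cs.wordProd_singleton]
  have hπC' : π ρ.reverse = r⁻¹ := by rw [cs.wordProd_reverse, ← hπ]
  -- first part
  have h1 : List.count t ((cs.rightInvSeq ρ).map
      (fun x => (π ([i] ++ ρ.reverse))⁻¹ * x * π ([i] ++ ρ.reverse)))
      = List.count (σ i) (cs.rightInvSeq ρ) := by
    have hinj : Function.Injective
        (fun x : W => (π ([i] ++ ρ.reverse))⁻¹ * x * π ([i] ++ ρ.reverse)) := by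
      intro x y hxy
      simp only at hxy
      exact mul_left_cancel (mul_right_cancel hxy)
    have hteq : t = (fun x : W => (π ([i] ++ ρ.reverse))⁻¹ * x * π ([i] ++ ρ.reverse)) (σ i) := by
      rw [hπC, hts]
      simp only [mul_inv_rev, inv_inv, cs.inv_simple, mul_assoc]
      simp only [invo_cancel_left (cs.simple_mul_simple_self i), inv_mul_cancel_left]
    conv_lhs => rw [hteq]
    exact List.count_map_of_injective _ _ hinj _
  -- middle part
  have h2 : List.count t ((cs.rightInvSeq [i]).map
      (fun x => (π ρ.reverse)⁻¹ * x * π ρ.reverse)) = 1 := by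
    rw [cs.rightInvSeq_singleton, List.map_singleton, hπC']
    have : r⁻¹⁻¹ * σ i * r⁻¹ = t := by rw [inv_inv, hts, mul_assoc]
    simp [this, List.count_cons, ← hts]
  -- last part
  have h3 : List.count t (cs.rightInvSeq ρ.reverse) = List.count (σ i) (cs.rightInvSeq ρ) := by
    rw [cs.rightInvSeq_reverse, List.count_reverse, lis_eq_map_conj, ← hπ]
    have hinj : Function.Injective (fun x : W => r * x * r⁻¹) := by
      intro x y hxy
      simp only at hxy
      exact mul_left_cancel (mul_right_cancel hxy)
    have hteq : t = (fun x : W => r * x * r⁻¹) (σ i) := by rw [hts]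
    conv_lhs => rw [hteq]
    exact List.count_map_of_injective _ _ hinj _
  rw [h1, h2, h3]
  push_cast
  rw [add_left_comm, CharTwo.add_self_eq_zero, add_zero]

theorem mu_eq_one {w t : W} (ht : cs.IsReflection t) (hlt : ℓ (w * t) < ℓ w) :
    mu cs w t = 1 := by
  obtain ⟨ρ₁, _, hπ₁⟩ := cs.exists_reduced_word' (w * t)
  obtain ⟨ρ₂, _, hπ₂⟩ := cs.exists_reduced_word' t
  have hword : w = π (ρ₁ ++ ρ₂) := by
    rw [cs.wordProd_append, ← hπ₁, ← hπ₂, mul_assoc, ht.mul_self, mul_one]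
  have hmu : mu cs w t = ((cs.rightInvSeq (ρ₁ ++ ρ₂)).count t : ZMod 2) := by
    rw [count_ris_eq_mu, ← hword]
  rw [hmu, rightInvSeq_append, List.count_append]
  have h1 : List.count t ((cs.rightInvSeq ρ₁).map (fun x => (π ρ₂)⁻¹ * x * π ρ₂))
      = List.count t (cs.rightInvSeq ρ₁) := by
    have hinj : Function.Injective (fun x : W => (π ρ₂)⁻¹ * x * π ρ₂) := by
      intro x y hxy
      simp only at hxy
      exact mul_left_cancel (mul_right_cancel hxy)
    have hteq : t = (fun x : W => (π ρ₂)⁻¹ * x * π ρ₂) t := by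
      simp only [← hπ₂]
      rw [ht.inv, ht.mul_self, one_mul]
    conv_lhs => rw [hteq]
    exact List.count_map_of_injective _ _ hinj _
  rw [h1]
  push_cast
  rw [count_ris_eq_mu, count_ris_eq_mu, ← hπ₁, ← hπ₂]
  have hz : mu cs (w * t) t = 0 := by
    apply mu_eq_zero cs ht
    rw [mul_assoc, ht.mul_self, mul_one]
    exact hlt
  rw [hz, mu_self cs ht, zero_add]

/-- Strong exchange property (right version). -/
theorem strong_exchange (ω : List B) {t : W} (ht : cs.IsReflection t)
    (hlt : ℓ (π ω * t) < ℓ (π ω)) :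
    ∃ j < ω.length, π (ω.eraseIdx j) = π ω * t := by
  have h1 : ((cs.rightInvSeq ω).count t : ZMod 2) = 1 := by
    rw [count_ris_eq_mu]; exact mu_eq_one cs ht hlt
  have h2 : t ∈ cs.rightInvSeq ω := by
    by_contra h
    rw [List.count_eq_zero.mpr h] at h1
    simp at h1
  obtain ⟨j, hj, hjt⟩ := List.getElem_of_mem h2
  refine ⟨j, by simpa using hj, ?_⟩
  have := cs.wordProd_mul_getD_rightInvSeq ω j
  rw [getD_eq_getElem _ _ hj, hjt] at this
  exact this.symm

/-- Strong exchange property (left version). -/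
theorem strong_exchange_left (ω : List B) {t : W} (ht : cs.IsReflection t)
    (hlt : ℓ (t * π ω) < ℓ (π ω)) :
    ∃ j < ω.length, π (ω.eraseIdx j) = t * π ω := by
  have h1 : ((cs.leftInvSeq ω).count t : ZMod 2) = 1 := by
    have hrev : (cs.leftInvSeq ω).count t = (cs.rightInvSeq ω.reverse).count t := by
      rw [cs.rightInvSeq_reverse, List.count_reverse]
    rw [hrev, count_ris_eq_mu, cs.wordProd_reverse]
    apply mu_eq_one cs ht
    have heq : (π ω)⁻¹ * t = (t * π ω)⁻¹ := by rw [mul_inv_rev, ht.inv]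
    rw [heq, cs.length_inv, cs.length_inv]
    exact hlt
  have h2 : t ∈ cs.leftInvSeq ω := by
    by_contra h
    rw [List.count_eq_zero.mpr h] at h1
    simp at h1
  obtain ⟨j, hj, hjt⟩ := List.getElem_of_mem h2
  refine ⟨j, by simpa using hj, ?_⟩
  have := cs.getD_leftInvSeq_mul_wordProd ω j
  rw [getD_eq_getElem _ _ hj, hjt] at this
  exact this.symm

/-! ### Deletion property -/

theorem exists_reduced_sublist_aux :
    ∀ n : ℕ, ∀ ω : List B, ω.length ≤ n →
      ∃ τ, τ.Sublist ω ∧ cs.IsReduced τ ∧ π τ = π ω := by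
  intro n
  induction n with
  | zero =>
    intro ω hω
    have : ω = [] := List.length_eq_zero_iff.mp (Nat.le_zero.mp hω)
    subst this
    exact ⟨[], List.Sublist.refl _, by simp [CoxeterSystem.IsReduced], rfl⟩
  | succ n IH =>
    intro ω hω
    by_cases hred : cs.IsReduced ω
    · exact ⟨ω, List.Sublist.refl _, hred, rfl⟩
    · have hP : ∃ m, ¬ cs.IsReduced (ω.take m) := ⟨ω.length, by rwa [List.take_length]⟩
      have hk₀ : ¬ cs.IsReduced (ω.take (Nat.find hP)) := Nat.find_spec hP
      have hk₀0 : Nat.find hP ≠ 0 := by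
        intro h
        apply hk₀
        rw [h]
        simp [CoxeterSystem.IsReduced]
      set k := Nat.find hP - 1 with hkdef
      have hk1 : Nat.find hP = k + 1 := by omega
      rw [hk1] at hk₀
      have hkred : cs.IsReduced (ω.take k) := by
        by_contra h
        have := Nat.find_min' hP h
        omega
      have hklt : k < ω.length := by
        by_contra h
        push_neg at h
        apply hk₀
        rw [List.take_of_length_le (by omega)]
        rwa [List.take_of_length_le h] at hkred
      have htake : ω.take (k+1) = ω.take k ++ [ω[k]] := by
        rw [List.take_succ, getElem?_eq_getElem hklt]
        rfl
      have hπtake : π (ω.take (k+1)) = π (ω.take k) * σ (ω[k]) := by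
        rw [htake, cs.wordProd_append, cs.wordProd_singleton]
      have hlen_take : (ω.take (k+1)).length = k + 1 := by
        rw [List.length_take]
        omega
      have hlenk : ℓ (π (ω.take k)) = k := by
        have h : cs.length (cs.wordProd (ω.take k)) = (ω.take k).length := hkred
        rwa [List.length_take, min_eq_left (by omega)] at h
      have hdesc : ℓ (π (ω.take k) * σ (ω[k])) < ℓ (π (ω.take k)) := by
        rcases cs.length_mul_simple (π (ω.take k)) (ω[k]) with h | h
        · exfalso
          apply hk₀
          show cs.length (cs.wordProd (ω.take (k+1))) = (ω.take (k+1)).length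
          rw [hlen_take, hπtake, h, hlenk]
        · omega
      obtain ⟨j, hj, hje⟩ := strong_exchange cs (ω.take k) (cs.isReflection_simple (ω[k])) hdesc
      set ω' := (ω.take k).eraseIdx j ++ ω.drop (k+1) with hω'
      have hsub' : ω'.Sublist ω := by
        conv_rhs => rw [← List.take_append_drop (k+1) ω]
        apply List.Sublist.append _ (List.Sublist.refl _)
        apply List.Sublist.trans (List.eraseIdx_sublist _ j)
        rw [htake]
        exact List.sublist_append_left _ _
      have hπ' : π ω' = π ω := by
        rw [hω', cs.wordProd_append, hje, ← hπtake]
        conv_rhs => rw [← List.take_append_drop (k+1) ω, cs.wordProd_append]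
      have hlen' : ω'.length ≤ n := by
        rw [hω', List.length_append, List.length_eraseIdx]
        rw [List.length_take] at hj ⊢
        rw [List.length_drop]
        simp only [hj, if_pos]
        omega
      obtain ⟨τ, hτsub, hτred, hτπ⟩ := IH ω' hlen'
      exact ⟨τ, hτsub.trans hsub', hτred, by rw [hτπ, hπ']⟩

theorem exists_reduced_sublist (ω : List B) :
    ∃ τ, τ.Sublist ω ∧ cs.IsReduced τ ∧ π τ = π ω :=
  exists_reduced_sublist_aux cs ω.length ω le_rfl

/-! ### The chain (Bruhat) order -/

def leT (x y : W) : Prop :=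
  Relation.ReflTransGen (fun a b => ∃ t, cs.IsReflection t ∧ b = a * t ∧ ℓ a < ℓ b) x y

theorem leT.refl (x : W) : leT cs x x := Relation.ReflTransGen.refl

theorem leT.trans {x y z : W} (h1 : leT cs x y) (h2 : leT cs y z) : leT cs x z :=
  Relation.ReflTransGen.trans h1 h2

theorem leT_single {x y t : W} (ht : cs.IsReflection t) (hxy : y = x * t) (hl : ℓ x < ℓ y) :
    leT cs x y :=
  Relation.ReflTransGen.single ⟨t, ht, hxy, hl⟩

theorem leT_length_le {x y : W} (h : leT cs x y) : ℓ x ≤ ℓ y := by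
  induction h with
  | refl => exact le_rfl
  | tail _ step ih =>
    obtain ⟨t, _, _, hl⟩ := step
    omega

theorem leT_simple_mul_left {x : W} (i : B) (h : ℓ x < ℓ (σ i * x)) :
    leT cs x (σ i * x) := by
  apply leT_single cs (t := x⁻¹ * σ i * x) _ _ h
  · have := (cs.isReflection_simple i).conj x⁻¹
    rwa [inv_inv] at this
  · rw [← mul_assoc, ← mul_assoc, mul_inv_cancel, one_mul]

theorem leT_simple_mul_left' {x : W} (i : B) (h : ℓ (σ i * x) < ℓ x) :
    leT cs (σ i * x) x := by
  apply leT_single cs (t := x⁻¹ * σ i * x) _ _ h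
  · have := (cs.isReflection_simple i).conj x⁻¹
    rwa [inv_inv] at this
  · simp only [mul_assoc, mul_inv_cancel_left]
    rw [invo_cancel_left (cs.simple_mul_simple_self i)]

theorem simple_mul_simple_cancel_left' (i : B) (x : W) : σ i * (σ i * x) = x :=
  cs.simple_mul_simple_cancel_left i
theorem big : ∀ n : ℕ, ∀ y : W, ℓ y ≤ n →
    ((∀ ρ, cs.IsReduced ρ → π ρ = y → ∀ τ, τ.Sublist ρ → leT cs (π τ) y) ∧
     (∀ (i : B) (x : W), leT cs x y → ℓ x < ℓ (σ i * x) → ℓ y < ℓ (σ i * y) →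
        leT cs (σ i * x) (σ i * y)) ∧
     (∀ (i : B) (x : W), leT cs x y → ℓ x < ℓ (σ i * x) → ℓ (σ i * y) < ℓ y →
        leT cs x (σ i * y))) := by
  intro n
  induction n with
  | zero =>
    intro y hy
    have hy1 : y = 1 := cs.length_eq_zero_iff.mp (Nat.le_zero.mp hy)
    subst hy1
    refine ⟨?_, ?_, ?_⟩
    · intro ρ hρred hρπ τ hτ
      have hρnil : ρ = [] := by
        have h : cs.length (cs.wordProd ρ) = ρ.length := hρred
        rw [hρπ, cs.length_one] at h
        exact List.length_eq_zero_iff.mp h.symm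
      subst hρnil
      have : τ = [] := List.sublist_nil.mp hτ
      subst this
      exact leT.refl cs _
    · intro i x hx _ _
      have hx0 : ℓ x ≤ 0 := by
        have := leT_length_le cs hx
        rwa [cs.length_one] at this
      have : x = 1 := cs.length_eq_zero_iff.mp (Nat.le_zero.mp hx0)
      subst this
      exact leT.refl cs _
    · intro i x hx hx2 hy2
      exfalso
      rw [cs.length_one] at hy2
      omega
  | succ n IH =>
    intro y hy
    refine ⟨?_, ?_, ?_⟩
    · -- subword implies chain
      intro ρ hρred hρπ τ hτ
      cases ρ with
      | nil =>
        have : τ = [] := List.sublist_nil.mp hτ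
        subst this
        rw [← hρπ]
        exact leT.refl cs _
      | cons i ρ₁ =>
        have hred₁ : cs.IsReduced ρ₁ := by
          have := hρred.drop 1
          simpa using this
        have hyval : y = σ i * π ρ₁ := by rw [← hρπ, cs.wordProd_cons]
        have hylen : ℓ y = ρ₁.length + 1 := by
          have h : cs.length (cs.wordProd (i :: ρ₁)) = (i :: ρ₁).length := hρred
          rw [hρπ] at h
          simpa using h
        have hy₁len : ℓ (π ρ₁) = ρ₁.length := hred₁
        have hy₁n : ℓ (π ρ₁) ≤ n := by omega
        have hasc : ℓ (π ρ₁) < ℓ (σ i * π ρ₁) := by rw [← hyval]; omega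
        rcases List.sublist_cons_iff.mp hτ with h | ⟨τ₁, rfl, hτ₁⟩
        · have h1 := (IH (π ρ₁) hy₁n).1 ρ₁ hred₁ rfl τ h
          apply leT.trans cs h1
          rw [hyval]
          exact leT_simple_mul_left cs i hasc
        · have h1 := (IH (π ρ₁) hy₁n).1 ρ₁ hred₁ rfl τ₁ hτ₁
          rw [cs.wordProd_cons]
          by_cases hx : ℓ (σ i * π τ₁) < ℓ (π τ₁)
          · apply leT.trans cs (leT_simple_mul_left' cs i hx)
            apply leT.trans cs h1
            rw [hyval]
            exact leT_simple_mul_left cs i hasc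
          · have hx' : ℓ (π τ₁) < ℓ (σ i * π τ₁) := by
              have := cs.length_simple_mul_ne (π τ₁) i
              omega
            have h2 := (IH (π ρ₁) hy₁n).2.1 i (π τ₁) h1 hx' hasc
            rwa [← hyval] at h2
    · -- lifting, up
      intro i x hxy hx hy'
      rcases Relation.ReflTransGen.cases_tail hxy with rfl | ⟨m, hxm, t, htr, hym, hlm⟩
      · exact leT.refl cs _
      · have hmn : ℓ m ≤ n := by omega
        by_cases hm : ℓ m < ℓ (σ i * m)
        · have h1 := (IH m hmn).2.1 i x hxm hx hm
          apply leT.trans cs h1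
          apply leT_single cs htr (by rw [hym, mul_assoc])
          rcases cs.length_simple_mul y i with h | h <;>
            rcases cs.length_simple_mul m i with h' | h' <;> omega
        · have hm' : ℓ (σ i * m) < ℓ m := by
            have := cs.length_simple_mul_ne m i
            omega
          have hQ := (IH m hmn).2.2 i x hxm hx hm'
          have hsmn : ℓ (σ i * m) ≤ n := by omega
          have hP := (IH (σ i * m) hsmn).2.1 i x hQ hx
            (by rw [simple_mul_simple_cancel_left' cs]; exact hm')
          rw [simple_mul_simple_cancel_left' cs] at hP
          apply leT.trans cs hP
          apply leT.trans cs (leT_single cs htr hym hlm)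
          exact leT_simple_mul_left cs i hy'
    · -- lifting, down
      intro i x hxy hx hy'
      rcases Relation.ReflTransGen.cases_tail hxy with rfl | ⟨m, hxm, t, htr, hym, hlm⟩
      · omega
      · have hmn : ℓ m ≤ n := by omega
        by_cases hm : ℓ (σ i * m) < ℓ m
        · have hQ := (IH m hmn).2.2 i x hxm hx hm
          apply leT.trans cs hQ
          apply leT_single cs htr (by rw [hym, mul_assoc])
          rcases cs.length_simple_mul y i with h | h <;>
            rcases cs.length_simple_mul m i with h' | h' <;> omega
        · have hm' : ℓ m < ℓ (σ i * m) := by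
            have := cs.length_simple_mul_ne m i
            omega
          by_cases hcmp : ℓ (σ i * m) < ℓ (σ i * y)
          · apply leT.trans cs hxm
            apply leT.trans cs (leT_simple_mul_left cs i hm')
            exact leT_single cs htr (by rw [hym, mul_assoc]) hcmp
          · have hne : ℓ (σ i * y) ≠ ℓ (σ i * m) := by
              have h := htr.length_mul_left_ne (σ i * m)
              have heq : σ i * y = σ i * m * t := by rw [hym, mul_assoc]
              rw [heq]
              exact h
            have hcmp' : ℓ (σ i * y) < ℓ (σ i * m) := by omega
            obtain ⟨ρ₁, hρred, hρπ⟩ := cs.exists_reduced_word' (σ i * y)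
            have hyw : π (i :: ρ₁) = y := by
              rw [cs.wordProd_cons, ← hρπ, simple_mul_simple_cancel_left' cs]
            have hyt : ℓ (y * t) < ℓ y := by
              have h : y * t = m := by rw [hym, mul_assoc, htr.mul_self, mul_one]
              rw [h]; exact hlm
            obtain ⟨j, hj, hje⟩ := strong_exchange cs (i :: ρ₁) htr (by rw [hyw]; exact hyt)
            have hjem : π ((i :: ρ₁).eraseIdx j) = m := by
              rw [hje, hyw, hym, mul_assoc, htr.mul_self, mul_one]
            cases j with
            | zero =>
              have h0 : (i :: ρ₁).eraseIdx 0 = ρ₁ := rfl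
              rw [h0] at hjem
              rw [show σ i * y = m from hρπ.trans hjem]
              exact hxm
            | succ k =>
              have hsm : σ i * m = π (ρ₁.eraseIdx k) := by
                have herase : (i :: ρ₁).eraseIdx (k+1) = i :: ρ₁.eraseIdx k := rfl
                rw [← hjem, herase, cs.wordProd_cons, simple_mul_simple_cancel_left' cs]
              have hsyn : ℓ (σ i * y) ≤ n := by omega
              have hsub := (IH (σ i * y) hsyn).1 ρ₁ hρred hρπ.symm (ρ₁.eraseIdx k)
                (List.eraseIdx_sublist _ k)
              rw [← hsm] at hsub
              exact leT.trans cs hxm (leT.trans cs (leT_simple_mul_left cs i hm') hsub)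

/-! ### Chains give subwords of every reduced word -/

theorem chain_subword_aux : ∀ n : ℕ, ∀ y u : W, ℓ y ≤ n → leT cs u y →
    ∀ ρ, cs.IsReduced ρ → π ρ = y → ∃ τ, τ.Sublist ρ ∧ π τ = u := by
  intro n
  induction n with
  | zero =>
    intro y u hy hle ρ hred hπ
    have hy1 : y = 1 := cs.length_eq_zero_iff.mp (Nat.le_zero.mp hy)
    have hu0 : ℓ u ≤ 0 := by
      have := leT_length_le cs hle
      omega
    have hu1 : u = 1 := cs.length_eq_zero_iff.mp (Nat.le_zero.mp hu0)
    exact ⟨ρ, List.Sublist.refl _, by rw [hπ, hy1, hu1]⟩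
  | succ n IH =>
    intro y u hy hle ρ hred hπ
    rcases Relation.ReflTransGen.cases_tail hle with rfl | ⟨m, hum, t, htr, hym, hlm⟩
    · exact ⟨ρ, List.Sublist.refl _, hπ⟩
    · have hdesc : ℓ (π ρ * t) < ℓ (π ρ) := by
        rw [hπ]
        have h : y * t = m := by rw [hym, mul_assoc, htr.mul_self, mul_one]
        rw [h]
        exact hlm
      obtain ⟨j, hj, hje⟩ := strong_exchange cs ρ htr hdesc
      obtain ⟨τ', hτ'sub, hτ'red, hτ'π⟩ := exists_reduced_sublist cs (ρ.eraseIdx j)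
      have hτ'm : π τ' = m := by
        rw [hτ'π, hje, hπ, hym, mul_assoc, htr.mul_self, mul_one]
      have hmn : ℓ m ≤ n := by omega
      obtain ⟨τ, hτsub, hτπ⟩ := IH m u hmn hum τ' hτ'red hτ'm
      exact ⟨τ, hτsub.trans (hτ'sub.trans (List.eraseIdx_sublist _ j)), hτπ⟩

/-- `u` is a subword-product of **every** reduced word of `w`. -/
def Rle (u w : W) : Prop :=
  ∀ ρ, cs.IsReduced ρ → π ρ = w → ∃ τ, τ.Sublist ρ ∧ π τ = u

theorem Rle_of_bruhatLE {u w : W} (h : bruhatLE cs u w) : Rle cs u w := by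
  obtain ⟨ρ₀, hred₀, hπ₀, τ₀, hsub₀, hτπ₀⟩ := h
  have hchain : leT cs u w := by
    have := (big cs (ℓ w) w le_rfl).1 ρ₀ hred₀ hπ₀ τ₀ hsub₀
    rwa [hτπ₀] at this
  intro ρ hred hπ
  exact chain_subword_aux cs (ℓ w) w u le_rfl hchain ρ hred hπ

theorem Rle_mul_simple_right_of_descent {u w : W} {i : B} (h : Rle cs u w)
    (hdesc : ℓ (u * σ i) < ℓ u) : Rle cs (u * σ i) w := by
  intro ρ hred hπ
  obtain ⟨τ, hsub, hτπ⟩ := h ρ hred hπ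
  obtain ⟨τ', hτ'sub, hτ'red, hτ'π⟩ := exists_reduced_sublist cs τ
  obtain ⟨j, hj, hje⟩ := strong_exchange cs τ' (cs.isReflection_simple i)
    (by rw [hτ'π, hτπ]; exact hdesc)
  exact ⟨τ'.eraseIdx j, ((List.eraseIdx_sublist _ _).trans hτ'sub).trans hsub,
    by rw [hje, hτ'π, hτπ]⟩

theorem Rle_one {u : W} (h : Rle cs u 1) : u = 1 := by
  obtain ⟨τ, hsub, hτπ⟩ := h [] (by simp [CoxeterSystem.IsReduced]) (by simp)
  have : τ = [] := List.sublist_nil.mp hsub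
  subst this
  rw [← hτπ]
  simp

/-! ### Demazure product -/

noncomputable def dR (i : B) (w : W) : W := if ℓ (w * σ i) < ℓ w then w else w * σ i
noncomputable def dL (i : B) (w : W) : W := if ℓ (σ i * w) < ℓ w then w else σ i * w

/-- The key exchange-type step for the greedy algorithm. -/
theorem Rle_step {u w : W} (i : B) (h : Rle cs u (dR cs i w)) :
    Rle cs (if ℓ (u * σ i) < ℓ u then u * σ i else u) w := by
  by_cases hw : ℓ (w * σ i) < ℓ w
  · rw [dR, if_pos hw] at h
    by_cases hu : ℓ (u * σ i) < ℓ u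
    · rw [if_pos hu]; exact Rle_mul_simple_right_of_descent cs h hu
    · rw [if_neg hu]; exact h
  · rw [dR, if_neg hw] at h
    have hw' : ℓ w < ℓ (w * σ i) := by
      have := cs.length_mul_simple_ne w i
      omega
    intro ρ hred hπ
    have hρlen : ℓ w = ρ.length := by rw [← hπ]; exact hred
    have hred' : cs.IsReduced (ρ ++ [i]) := by
      show ℓ (π (ρ ++ [i])) = (ρ ++ [i]).length
      rw [cs.wordProd_append, cs.wordProd_singleton, hπ, List.length_append,
        List.length_singleton]
      have hwi : ℓ (w * σ i) = ℓ w + 1 := by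
        rcases cs.length_mul_simple w i with h1 | h1 <;> omega
      omega
    obtain ⟨τ, hsub, hτπ⟩ := h (ρ ++ [i]) hred'
      (by rw [cs.wordProd_append, cs.wordProd_singleton, hπ])
    rcases List.sublist_append_iff.mp hsub with ⟨τ₁, τ₂, rfl, hsub₁, hsub₂⟩
    rw [cs.wordProd_append] at hτπ
    rcases List.sublist_cons_iff.mp hsub₂ with h2 | ⟨r, rfl, hr⟩
    · -- τ₂ = []
      have hτ₂ : τ₂ = [] := List.sublist_nil.mp h2
      subst hτ₂
      rw [cs.wordProd_nil, mul_one] at hτπ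
      by_cases hu : ℓ (u * σ i) < ℓ u
      · rw [if_pos hu]
        obtain ⟨τ', hτ'sub, hτ'red, hτ'π⟩ := exists_reduced_sublist cs τ₁
        obtain ⟨j, hj, hje⟩ := strong_exchange cs τ' (cs.isReflection_simple i)
          (by rw [hτ'π, hτπ]; exact hu)
        exact ⟨τ'.eraseIdx j, ((List.eraseIdx_sublist _ _).trans hτ'sub).trans hsub₁,
          by rw [hje, hτ'π, hτπ]⟩
      · rw [if_neg hu]; exact ⟨τ₁, hsub₁, hτπ⟩
    · -- τ₂ = i :: r with r <+ []
      have hrnil : r = [] := List.sublist_nil.mp hr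
      subst hrnil
      rw [cs.wordProd_singleton] at hτπ
      by_cases hu : ℓ (u * σ i) < ℓ u
      · rw [if_pos hu]
        refine ⟨τ₁, hsub₁, ?_⟩
        rw [← hτπ, mul_assoc, cs.simple_mul_simple_self, mul_one]
      · rw [if_neg hu]
        have hu' : ℓ u < ℓ (u * σ i) := by
          have := cs.length_mul_simple_ne u i
          omega
        obtain ⟨τ', hτ'sub, hτ'red, hτ'π⟩ := exists_reduced_sublist cs τ₁
        have hτ₁u : π τ₁ = u * σ i := by
          rw [← hτπ, mul_assoc, cs.simple_mul_simple_self, mul_one]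
        have hdesc : ℓ (π τ' * σ i) < ℓ (π τ') := by
          rw [hτ'π, hτ₁u, mul_assoc, cs.simple_mul_simple_self, mul_one]
          exact hu'
        obtain ⟨j, hj, hje⟩ := strong_exchange cs τ' (cs.isReflection_simple i) hdesc
        refine ⟨τ'.eraseIdx j, ((List.eraseIdx_sublist _ _).trans hτ'sub).trans hsub₁, ?_⟩
        rw [hje, hτ'π, hτ₁u, mul_assoc, cs.simple_mul_simple_self, mul_one]

/-- The centerpiece algebraic fact: `σ j * a = a * σ i` in the critical configuration. -/
theorem tas_lemma {a : W} {i j : B} (hta : ℓ a < ℓ (σ j * a)) (has : ℓ a < ℓ (a * σ i))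
    (htas : ℓ (σ j * (a * σ i)) < ℓ (a * σ i)) : σ j * a = a * σ i := by
  obtain ⟨ρ, hρred, hρπ⟩ := cs.exists_reduced_word' a
  have hρlen : ℓ a = ρ.length := by rw [hρπ]; exact hρred
  have hasval : ℓ (a * σ i) = ℓ a + 1 := by
    rcases cs.length_mul_simple a i with h1 | h1 <;> omega
  have hred' : cs.IsReduced (ρ ++ [i]) := by
    show ℓ (π (ρ ++ [i])) = (ρ ++ [i]).length
    rw [cs.wordProd_append, cs.wordProd_singleton, ← hρπ, List.length_append,
      List.length_singleton]
    omega
  have hπ' : π (ρ ++ [i]) = a * σ i := by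
    rw [cs.wordProd_append, cs.wordProd_singleton, ← hρπ]
  obtain ⟨k, hk, hke⟩ := strong_exchange_left cs (ρ ++ [i]) (cs.isReflection_simple j)
    (by rw [hπ']; exact htas)
  rw [hπ'] at hke
  have hklen : k < ρ.length + 1 := by simpa using hk
  rcases Nat.lt_or_ge k ρ.length with hkc | hkc
  · exfalso
    have herase : (ρ ++ [i]).eraseIdx k = ρ.eraseIdx k ++ [i] := by
      rw [List.eraseIdx_append_of_lt_length hkc]
    rw [herase, cs.wordProd_append, cs.wordProd_singleton] at hke
    have hja : π (ρ.eraseIdx k) = σ j * a := by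
      have := congrArg (fun z => z * σ i) hke
      simpa only [mul_assoc, cs.simple_mul_simple_self, mul_one] using this
    have hlen1 : ℓ (σ j * a) ≤ (ρ.eraseIdx k).length := by
      rw [← hja]; exact cs.length_wordProd_le _
    rw [List.length_eraseIdx, if_pos hkc] at hlen1
    omega
  · have hkeq : k = ρ.length := by omega
    have herase : (ρ ++ [i]).eraseIdx k = ρ := by
      rw [hkeq, List.eraseIdx_append_of_length_le le_rfl]
      simp
    rw [herase, ← hρπ] at hke
    -- hke : a = σ j * (a * σ i)
    have := congrArg (fun z => z * σ i) hke.symm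
    simpa only [mul_assoc, cs.simple_mul_simple_self, mul_one] using this

theorem dem_comm (j i : B) (a : W) : dL cs j (dR cs i a) = dR cs i (dL cs j a) := by
  have hbound_l : ∀ w : W, ℓ (σ j * w) ≤ ℓ w + 1 := by
    intro w
    rcases cs.length_simple_mul w j with h | h <;> omega
  by_cases has : ℓ (a * σ i) < ℓ a
  · rw [dR, if_pos has]
    by_cases hta : ℓ (σ j * a) < ℓ a
    · rw [dL, if_pos hta, dR, if_pos has]
    · rw [dL, if_neg hta, dR]
      have hta' : ℓ a < ℓ (σ j * a) := by
        have := cs.length_simple_mul_ne a j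
        omega
      have hd : ℓ (σ j * a * σ i) < ℓ (σ j * a) := by
        have h1 : ℓ (σ j * a * σ i) ≤ ℓ (a * σ i) + 1 := by
          rw [mul_assoc]
          exact hbound_l _
        omega
      rw [if_pos hd]
  · have has' : ℓ a < ℓ (a * σ i) := by
      have := cs.length_mul_simple_ne a i
      omega
    rw [dR, if_neg has]
    by_cases hta : ℓ (σ j * a) < ℓ a
    · rw [dL, dL, if_pos hta, dR, if_neg has]
      have hd : ℓ (σ j * (a * σ i)) < ℓ (a * σ i) := by
        have h1 : ℓ (σ j * (a * σ i)) = ℓ (σ j * a * σ i) := by rw [mul_assoc]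
        have h2 : ℓ (σ j * a * σ i) ≤ ℓ (σ j * a) + 1 := by
          rcases cs.length_mul_simple (σ j * a) i with h | h <;> omega
        have h3 : ℓ (a * σ i) = ℓ a + 1 := by
          rcases cs.length_mul_simple a i with h | h <;> omega
        omega
      rw [if_pos hd]
    · have hta' : ℓ a < ℓ (σ j * a) := by
        have := cs.length_simple_mul_ne a j
        omega
      by_cases htas : ℓ (σ j * (a * σ i)) < ℓ (a * σ i)
      · have key := tas_lemma cs hta' has' htas
        rw [dL, if_pos htas, dL, if_neg hta, dR]
        have hd : ℓ (σ j * a * σ i) < ℓ (σ j * a) := by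
          have h1 : σ j * a * σ i = a := by
            rw [key, mul_assoc, cs.simple_mul_simple_self, mul_one]
          rw [h1, key]
          exact has'
        rw [if_pos hd, key]
      · rw [dL, if_neg htas, dL, if_neg hta, dR]
        have hd : ¬ ℓ (σ j * a * σ i) < ℓ (σ j * a) := by
          have h1 : ℓ (σ j * a * σ i) = ℓ (σ j * (a * σ i)) := by rw [mul_assoc]
          have h2 : ℓ (a * σ i) ≤ ℓ (σ j * (a * σ i)) := by
            have := cs.length_simple_mul_ne (a * σ i) j
            omega
          have h3 : ℓ (a * σ i) = ℓ a + 1 := by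
            rcases cs.length_mul_simple a i with h | h <;> omega
          have h4 : ℓ (σ j * a) ≤ ℓ a + 1 := hbound_l a
          have h5 : ℓ (σ j * (a * σ i)) ≠ ℓ (a * σ i) := cs.length_simple_mul_ne (a * σ i) j
          omega
        rw [if_neg hd, mul_assoc]

theorem demazureProd_cons' (i : B) (ω : List B) :
    demazureProd cs (i :: ω) = dL cs i (demazureProd cs ω) := rfl

theorem demazureProd_concat' (ω : List B) (i : B) :
    demazureProd cs (ω ++ [i]) = dR cs i (demazureProd cs ω) := by
  induction ω with
  | nil =>
    show demazureProd cs [i] = dR cs i 1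
    have h1 : demazureProd cs [i] = dL cs i 1 := rfl
    rw [h1, dL, dR]
    rw [mul_one, one_mul, cs.length_one, cs.length_simple]
  | cons j ω ih =>
    show dL cs j (demazureProd cs (ω ++ [i])) = dR cs i (dL cs j (demazureProd cs ω))
    rw [ih, dem_comm]

/-! ### The greedy (right-most) algorithm -/

theorem rightMostAux_cons (i : B) (l : List B) (v : W) :
    rightMostAux cs (i :: l) v =
      if ℓ (v * σ i) < ℓ v then some i :: rightMostAux cs l (v * σ i)
      else none :: rightMostAux cs l v := rfl

theorem aux_length : ∀ (l : List B) (v : W), (rightMostAux cs l v).length = l.length := by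
  intro l
  induction l with
  | nil => intro v; rfl
  | cons i l ih =>
    intro v
    rw [rightMostAux_cons]
    by_cases hv : ℓ (v * σ i) < ℓ v
    · rw [if_pos hv, List.length_cons, ih]
      rfl
    · rw [if_neg hv, List.length_cons, ih]
      rfl

theorem greedy_final : ∀ (l : List B) (v : W),
    Rle cs v (demazureProd cs l.reverse) →
    v * π ((rightMostAux cs l v).reduceOption) = 1 := by
  intro l
  induction l with
  | nil =>
    intro v h
    have hv : v = 1 := Rle_one cs (by simpa [demazureProd] using h)
    simp [rightMostAux, hv]
  | cons i l ih =>
    intro v h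
    have hrev : (i :: l).reverse = l.reverse ++ [i] := by simp
    rw [hrev, demazureProd_concat'] at h
    have hkey := Rle_step cs i h
    rw [rightMostAux_cons]
    by_cases hv : ℓ (v * σ i) < ℓ v
    · rw [if_pos hv] at hkey
      rw [if_pos hv, List.reduceOption_cons_of_some, cs.wordProd_cons, ← mul_assoc]
      exact ih (v * σ i) hkey
    · rw [if_neg hv] at hkey
      rw [if_neg hv, List.reduceOption_cons_of_none]
      exact ih v hkey

theorem aux_split : ∀ (l : List B) (v : W) (j : ℕ),
    (rightMostAux cs l v).drop j
      = rightMostAux cs (l.drop j) (v * π (((rightMostAux cs l v).take j).reduceOption)) := by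
  intro l
  induction l with
  | nil =>
    intro v j
    simp [rightMostAux]
  | cons i l ih =>
    intro v j
    cases j with
    | zero =>
      simp
    | succ j =>
      rw [rightMostAux_cons]
      by_cases hv : ℓ (v * σ i) < ℓ v
      · rw [if_pos hv, List.drop_succ_cons, List.take_succ_cons,
          List.reduceOption_cons_of_some, cs.wordProd_cons, ← mul_assoc]
        exact ih (v * σ i) j
      · rw [if_neg hv, List.drop_succ_cons, List.take_succ_cons,
          List.reduceOption_cons_of_none]
        exact ih v j

theorem reduceOption_reverse' {α : Type*} : ∀ l : List (Option α),
    l.reverse.reduceOption = l.reduceOption.reverse := by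
  intro l
  induction l with
  | nil => rfl
  | cons a l ih =>
    rw [List.reverse_cons, List.reduceOption_append, ih]
    cases a with
    | none => simp [List.reduceOption_cons_of_none]
    | some x => simp [List.reduceOption_cons_of_some]

theorem bruhatLE_refl (x : W) : bruhatLE cs x x := by
  obtain ⟨ρ, hred, hπ⟩ := cs.exists_reduced_word' x
  exact ⟨ρ, hred, hπ.symm, ρ, List.Sublist.refl _, hπ.symm⟩

theorem bruhatLE_mul_simple_of_ascent {x : W} {i : B} (h : ℓ x < ℓ (x * σ i)) :
    bruhatLE cs x (x * σ i) := by
  obtain ⟨ρ, hred, hπ⟩ := cs.exists_reduced_word' x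
  have hred' : cs.IsReduced (ρ ++ [i]) := by
    show ℓ (π (ρ ++ [i])) = (ρ ++ [i]).length
    rw [cs.wordProd_append, cs.wordProd_singleton, ← hπ, List.length_append,
      List.length_singleton]
    have h1 : ℓ x = ρ.length := by rw [hπ]; exact hred
    have h2 : ℓ (x * σ i) = ℓ x + 1 := by
      rcases cs.length_mul_simple x i with h' | h' <;> omega
    omega
  exact ⟨ρ ++ [i], hred',
    by rw [cs.wordProd_append, cs.wordProd_singleton, ← hπ],
    ρ, List.sublist_append_left _ _, hπ.symm⟩

end RMAux

/-- **The right-most subexpression is distinguished.**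
For any expression `𝐰` and `v ≤ m_*(𝐰)`, the partial products
`v_{(k)} = s'_{i_1} ⋯ s'_{i_k}` of the right-most subexpression of `v` in `𝐰`
satisfy `v_{(k)} ≤ v_{(k-1)} s_{i_k}` in Bruhat order for all `k`. -/
theorem rightMost_distinguished (cs : CoxeterSystem M W) (ω : List B) (v : W)
    (hv : bruhatLE cs v (demazureProd cs ω)) :
    ∀ (k : ℕ) (h : k < ω.length),
      bruhatLE cs
        (cs.wordProd (((rightMostSub cs ω v).take (k + 1)).reduceOption))
        (cs.wordProd (((rightMostSub cs ω v).take k).reduceOption) *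
          cs.simple (ω.get ⟨k, h⟩)) := by
  intro k hk
  set n := ω.length with hn
  set ρ := ω.reverse with hρ
  set L := rightMostAux cs ρ v with hL
  have hρlen : ρ.length = n := by rw [hρ, List.length_reverse]
  have hLlen : L.length = n := by rw [hL, RMAux.aux_length, hρlen]
  have hfinal : v * cs.wordProd L.reduceOption = 1 := by
    apply RMAux.greedy_final cs ρ v
    have : ρ.reverse = ω := by rw [hρ, List.reverse_reverse]
    rw [this]
    exact RMAux.Rle_of_bruhatLE cs hv
  have key : ∀ j : ℕ, j ≤ n →
      cs.wordProd (((rightMostSub cs ω v).take (n - j)).reduceOption)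
        = v * cs.wordProd ((L.take j).reduceOption) := by
    intro j hj
    have h1 : (rightMostSub cs ω v).take (n - j) = (L.drop j).reverse := by
      rw [rightMostSub, ← hρ, ← hL, List.take_reverse]
      congr 2
      omega
    rw [h1, RMAux.reduceOption_reverse', cs.wordProd_reverse]
    have h2 : cs.wordProd ((L.take j).reduceOption) * cs.wordProd ((L.drop j).reduceOption)
        = cs.wordProd L.reduceOption := by
      rw [← cs.wordProd_append, ← List.reduceOption_append, List.take_append_drop]
    have h3 : (v * cs.wordProd ((L.take j).reduceOption))
        * cs.wordProd ((L.drop j).reduceOption) = 1 := by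
      rw [mul_assoc, h2]
      exact hfinal
    exact inv_eq_of_mul_eq_one_left h3
  set j := n - 1 - k with hjdef
  have hjlt : j < n := by omega
  have hjρ : j < ρ.length := by omega
  have e1 : n - j = k + 1 := by omega
  have e2 : n - (j + 1) = k := by omega
  have hk1 := key j (by omega)
  have hk2 := key (j + 1) (by omega)
  rw [e1] at hk1
  rw [e2] at hk2
  have hidx : ρ[j]'hjρ = ω.get ⟨k, hk⟩ := by
    simp only [List.get_eq_getElem, hρ, List.getElem_reverse]
    congr 1
    omega
  have hdropj : ρ.drop j = (ω.get ⟨k, hk⟩) :: ρ.drop (j + 1) := by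
    rw [List.drop_eq_getElem_cons hjρ, hidx]
  have hsplit := RMAux.aux_split cs ρ v j
  rw [← hL] at hsplit
  set u := v * cs.wordProd ((L.take j).reduceOption) with hu
  rw [hdropj, RMAux.rightMostAux_cons] at hsplit
  have htk : L.take (j + 1) = L.take j ++ (L.drop j).take 1 := by
    rw [← List.take_add]
  set i0 := ω.get ⟨k, hk⟩ with hi0
  by_cases hc : cs.length (u * cs.simple i0) < cs.length u
  · rw [if_pos hc] at hsplit
    have hval2 : cs.wordProd ((L.take (j + 1)).reduceOption) =
        cs.wordProd ((L.take j).reduceOption) * cs.simple i0 := by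
      rw [htk, hsplit, List.reduceOption_append, cs.wordProd_append]
      have h1 : ((some i0 :: rightMostAux cs (ρ.drop (j + 1)) (u * cs.simple i0)).take 1).reduceOption
          = [i0] := rfl
      rw [h1, cs.wordProd_singleton]
    rw [hk1, hk2, hval2]
    have hcan : v * (cs.wordProd ((L.take j).reduceOption) * cs.simple i0) * cs.simple i0
        = u := by
      rw [hu]
      simp only [mul_assoc]
      rw [cs.simple_mul_simple_self, mul_one]
    rw [hcan]
    exact RMAux.bruhatLE_refl cs u
  · rw [if_neg hc] at hsplit
    have hval2 : cs.wordProd ((L.take (j + 1)).reduceOption) =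
        cs.wordProd ((L.take j).reduceOption) := by
      rw [htk, hsplit, List.reduceOption_append, cs.wordProd_append]
      have h1 : ((none :: rightMostAux cs (ρ.drop (j + 1)) u).take 1).reduceOption
          = ([] : List B) := rfl
      rw [h1, cs.wordProd_nil, mul_one]
    rw [hk1, hk2, hval2, ← hu]
    have hasc : cs.length u < cs.length (u * cs.simple i0) := by
      have := cs.length_mul_simple_ne u i0
      omega
    exact RMAux.bruhatLE_mul_simple_of_ascent cs hasc
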